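/- For all classical modal formulas α and β: α⊢_K β if and only if α⊢_{MT₀}β, where ⊢_K is derivability in the Hilbert system of classical modal logic K and ⊢_{MT₀} is derivability in the Hilbert system of MT₀. -/

import Mathlib

/-- Classical modal formulas: α ::= p | ⊥ | ¬α | α∧α | α⊗α | α→α | □α | ◇α,
where the negation ¬α abbreviates α→⊥. -/
inductive CForm : Type where
  | var : ℕ → CForm
  | bot : CForm
  | and : CForm → CForm → CForm
  | tensor : CForm → CForm → CForm
  | impl : CForm → CForm → CForm
  | box : CForm → CForm
  | dia : CForm → CForm

/-- ¬α abbreviates α→⊥. -/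
def CForm.neg (α : CForm) : CForm := α.impl .bot

/-- Formulas of full modal downward closed team logic MT₀:
φ ::= α | =(α₁,…,αₙ,β) | φ∧φ | φ⊗φ | φ∨φ | φ→φ | □φ | ◇φ, with α,αᵢ,β classical. -/
inductive MTForm : Type where
  | var : ℕ → MTForm
  | bot : MTForm
  | dep : List CForm → CForm → MTForm
  | and : MTForm → MTForm → MTForm
  | tensor : MTForm → MTForm → MTForm
  | or : MTForm → MTForm → MTForm
  | impl : MTForm → MTForm → MTForm
  | box : MTForm → MTForm
  | dia : MTForm → MTForm

/-- The structural embedding of classical modal formulas into MT₀ formulas. -/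
def CForm.toMT : CForm → MTForm
  | .var p => .var p
  | .bot => .bot
  | .and α β => .and α.toMT β.toMT
  | .tensor α β => .tensor α.toMT β.toMT
  | .impl α β => .impl α.toMT β.toMT
  | .box α => .box α.toMT
  | .dia α => .dia α.toMT

/-- ¬φ abbreviates φ→⊥. -/
def mneg (φ : MTForm) : MTForm := φ.impl .bot

/-- φ↔ψ abbreviates (φ→ψ)∧(ψ→φ). -/
def MTForm.iff (φ ψ : MTForm) : MTForm := (φ.impl ψ).and (ψ.impl φ)

/-- The law of excluded middle formula α∨¬α for a classical formula α. -/
def exclMid (α : CForm) : MTForm := (α.toMT).or (mneg α.toMT)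

/-- Conjunction of a list of formulas; the empty conjunction is ⊥→⊥ (truth). -/
def bigAnd : List MTForm → MTForm
  | [] => MTForm.impl .bot .bot
  | [φ] => φ
  | φ :: ψ :: χs => .and φ (bigAnd (ψ :: χs))

/-- Axiom schemes of the Hilbert system of MT₀. -/
inductive MTAx : MTForm → Prop where
  -- axiom schemes of intuitionistic propositional logic
  | ipc1 (φ ψ : MTForm) : MTAx (φ.impl (ψ.impl φ))
  | ipc2 (φ ψ χ : MTForm) :
      MTAx ((φ.impl (ψ.impl χ)).impl ((φ.impl ψ).impl (φ.impl χ)))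
  | ipc3a (φ ψ : MTForm) : MTAx ((φ.and ψ).impl φ)
  | ipc3b (φ ψ : MTForm) : MTAx ((φ.and ψ).impl ψ)
  | ipc4 (φ χ : MTForm) : MTAx (φ.impl (χ.impl (φ.and χ)))
  | ipc5a (φ ψ : MTForm) : MTAx (φ.impl (φ.or ψ))
  | ipc5b (φ ψ : MTForm) : MTAx (ψ.impl (φ.or ψ))
  | ipc6 (φ ψ χ : MTForm) :
      MTAx ((φ.impl χ).impl ((ψ.impl χ).impl ((φ.or ψ).impl χ)))
  | ipc7 (φ : MTForm) : MTAx (MTForm.bot.impl φ)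
  -- the split axiom, for classical α
  | split (α : CForm) (φ ψ : MTForm) :
      MTAx ((α.toMT.impl (φ.or ψ)).impl ((α.toMT.impl φ).or (α.toMT.impl ψ)))
  -- double negation law for classical α
  | dne (α : CForm) : MTAx ((mneg (mneg α.toMT)).impl α.toMT)
  -- modal axiom schemes (Fischer Servi's IK)
  | kbox (φ ψ : MTForm) :
      MTAx ((MTForm.box (φ.impl ψ)).impl ((MTForm.box φ).impl (MTForm.box ψ)))
  | kdia (φ ψ : MTForm) :
      MTAx ((MTForm.box (φ.impl ψ)).impl ((MTForm.dia φ).impl (MTForm.dia ψ)))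
  | negDiaBot : MTAx (mneg (MTForm.dia .bot))
  | diaOr (φ ψ : MTForm) :
      MTAx ((MTForm.dia (φ.or ψ)).impl ((MTForm.dia φ).or (MTForm.dia ψ)))
  | fs (φ ψ : MTForm) :
      MTAx (((MTForm.dia φ).impl (MTForm.box ψ)).impl (MTForm.box (φ.impl ψ)))
  -- dependence atom axiom
  | depAx (αs : List CForm) (β : CForm) :
      MTAx ((MTForm.dep αs β).iff ((bigAnd (αs.map exclMid)).impl (exclMid β)))
  -- tensor axioms
  | tensor1 (φ ψ : MTForm) : MTAx (φ.impl (φ.tensor ψ))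
  | tensor2 (φ ψ : MTForm) (α : CForm) :
      MTAx ((φ.impl α.toMT).impl ((ψ.impl α.toMT).impl ((φ.tensor ψ).impl α.toMT)))
  | tensor3 (φ ψ χ θ : MTForm) :
      MTAx ((φ.impl χ).impl ((ψ.impl θ).impl ((φ.tensor ψ).impl (χ.tensor θ))))
  | tensorComm (φ ψ : MTForm) : MTAx ((φ.tensor ψ).impl (ψ.tensor φ))
  | tensorAssoc (φ ψ χ : MTForm) :
      MTAx ((φ.tensor (ψ.tensor χ)).impl ((φ.tensor ψ).tensor χ))
  | tensorOr (φ ψ χ : MTForm) :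
      MTAx ((φ.tensor (ψ.or χ)).impl ((φ.tensor ψ).or (φ.tensor χ)))
  -- interaction of box and diamond on classical formulas
  | boxDiaNeg (α : CForm) :
      MTAx ((mneg (MTForm.box α.toMT)).impl (MTForm.dia (mneg α.toMT)))
  -- box distributes over intuitionistic disjunction
  | boxOr (φ ψ : MTForm) :
      MTAx ((MTForm.box (φ.or ψ)).impl ((MTForm.box φ).or (MTForm.box ψ)))

/-- Theorems of the Hilbert system of MT₀ (derivations from no assumptions,
using modus ponens and necessitation). -/
inductive MTThm : MTForm → Prop where
  | ax {φ : MTForm} : MTAx φ → MTThm φ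
  | mp {φ ψ : MTForm} : MTThm (φ.impl ψ) → MTThm φ → MTThm ψ
  | nec {φ : MTForm} : MTThm φ → MTThm φ.box

/-- φ⊢ψ : derivations of ψ from the assumption φ, in which necessitation is
applied only to theorems. -/
inductive MTDer (γ : MTForm) : MTForm → Prop where
  | hyp : MTDer γ γ
  | thm {φ : MTForm} : MTThm φ → MTDer γ φ
  | mp {φ ψ : MTForm} : MTDer γ (φ.impl ψ) → MTDer γ φ → MTDer γ ψ

/-- α↔β abbreviates (α→β)∧(β→α). -/
def CForm.iff (α β : CForm) : CForm := (α.impl β).and (β.impl α)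

/-- Uniform substitution of classical formulas for propositional variables. -/
def csubst (σ : ℕ → CForm) : CForm → CForm
  | .var p => σ p
  | .bot => .bot
  | .and α β => .and (csubst σ α) (csubst σ β)
  | .tensor α β => .tensor (csubst σ α) (csubst σ β)
  | .impl α β => .impl (csubst σ α) (csubst σ β)
  | .box α => .box (csubst σ α)
  | .dia α => .dia (csubst σ α)

/-- Axioms of the Hilbert system of classical modal logic K: all axioms of
classical propositional logic (with ⊗ as the disjunction), the K axiom, and the
interdefinability of ◇ and □. -/
inductive KAx : CForm → Prop where
  | cp1 (α β : CForm) : KAx (α.impl (β.impl α))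
  | cp2 (α β γ : CForm) :
      KAx ((α.impl (β.impl γ)).impl ((α.impl β).impl (α.impl γ)))
  | cp3a (α β : CForm) : KAx ((α.and β).impl α)
  | cp3b (α β : CForm) : KAx ((α.and β).impl β)
  | cp4 (α γ : CForm) : KAx (α.impl (γ.impl (α.and γ)))
  | cp5a (α β : CForm) : KAx (α.impl (α.tensor β))
  | cp5b (α β : CForm) : KAx (β.impl (α.tensor β))
  | cp6 (α β γ : CForm) :
      KAx ((α.impl γ).impl ((β.impl γ).impl ((α.tensor β).impl γ)))
  | cp7 (α : CForm) : KAx (CForm.bot.impl α)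
  | dne (α : CForm) : KAx (α.neg.neg.impl α)
  | kax (α β : CForm) :
      KAx ((CForm.box (α.impl β)).impl ((CForm.box α).impl (CForm.box β)))
  | diaDef (α : CForm) : KAx ((CForm.dia α).iff (CForm.neg (CForm.box α.neg)))

/-- Theorems of the Hilbert system of K (modus ponens, necessitation and uniform
substitution). -/
inductive KThm : CForm → Prop where
  | ax {α : CForm} : KAx α → KThm α
  | mp {α β : CForm} : KThm (α.impl β) → KThm α → KThm β
  | nec {α : CForm} : KThm α → KThm α.box
  | subst {α : CForm} (σ : ℕ → CForm) : KThm α → KThm (csubst σ α)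

/-- α⊢_K β : derivations of β from the assumption α, in which necessitation and
uniform substitution are applied only to theorems. -/
inductive KDer (γ : CForm) : CForm → Prop where
  | hyp : KDer γ γ
  | thm {α : CForm} : KThm α → KDer γ α
  | mp {α β : CForm} : KDer γ (α.impl β) → KDer γ α → KDer γ β

section Aux

open MTForm CForm

/-! ### MT Hilbert toolkit -/

private lemma mtI (φ : MTForm) : MTThm (φ.impl φ) :=
  MTThm.mp (MTThm.mp (MTThm.ax (MTAx.ipc2 φ (φ.impl φ) φ))
    (MTThm.ax (MTAx.ipc1 φ (φ.impl φ)))) (MTThm.ax (MTAx.ipc1 φ φ))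

private lemma mtLift {ψ χ : MTForm} (φ : MTForm) (h : MTThm (ψ.impl χ)) :
    MTThm ((φ.impl ψ).impl (φ.impl χ)) :=
  MTThm.mp (MTThm.ax (MTAx.ipc2 φ ψ χ)) (MTThm.mp (MTThm.ax (MTAx.ipc1 _ _)) h)

private lemma mtTrans {φ ψ χ : MTForm} (h1 : MTThm (φ.impl ψ)) (h2 : MTThm (ψ.impl χ)) :
    MTThm (φ.impl χ) :=
  MTThm.mp (mtLift φ h2) h1

private lemma mtSwap {φ ψ χ : MTForm} (h : MTThm (φ.impl (ψ.impl χ))) :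
    MTThm (ψ.impl (φ.impl χ)) :=
  mtTrans (MTThm.ax (MTAx.ipc1 ψ φ)) (MTThm.mp (MTThm.ax (MTAx.ipc2 φ ψ χ)) h)

/-! ### Substitution elimination for K -/

private lemma kax_subst {α : CForm} (σ : ℕ → CForm) (h : KAx α) : KAx (csubst σ α) := by
  cases h with
  | cp1 a b => exact KAx.cp1 _ _
  | cp2 a b c => exact KAx.cp2 _ _ _
  | cp3a a b => exact KAx.cp3a _ _
  | cp3b a b => exact KAx.cp3b _ _
  | cp4 a b => exact KAx.cp4 _ _
  | cp5a a b => exact KAx.cp5a _ _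
  | cp5b a b => exact KAx.cp5b _ _
  | cp6 a b c => exact KAx.cp6 _ _ _
  | cp7 a => exact KAx.cp7 _
  | dne a => exact KAx.dne _
  | kax a b => exact KAx.kax _ _
  | diaDef a => exact KAx.diaDef _

/-- K theorems without the substitution rule. -/
inductive KThmN : CForm → Prop where
  | ax {α : CForm} : KAx α → KThmN α
  | mp {α β : CForm} : KThmN (α.impl β) → KThmN α → KThmN β
  | nec {α : CForm} : KThmN α → KThmN α.box

private lemma csubst_comp (σ τ : ℕ → CForm) (α : CForm) :
    csubst σ (csubst τ α) = csubst (fun p => csubst σ (τ p)) α := by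
  induction α <;> simp [csubst, *]

private lemma csubst_var (α : CForm) : csubst CForm.var α = α := by
  induction α <;> simp [csubst, *]

private lemma KThmN_subst {α : CForm} (σ : ℕ → CForm) (h : KThmN α) : KThmN (csubst σ α) := by
  induction h generalizing σ with
  | ax h => exact KThmN.ax (kax_subst σ h)
  | mp h1 h2 ih1 ih2 => exact KThmN.mp (ih1 σ) (ih2 σ)
  | nec h ih => exact KThmN.nec (ih σ)

private lemma KThm_toN {α : CForm} (h : KThm α) : KThmN α := by
  induction h with
  | ax h => exact KThmN.ax h
  | mp _ _ ih1 ih2 => exact KThmN.mp ih1 ih2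
  | nec _ ih => exact KThmN.nec ih
  | subst σ _ ih => exact KThmN_subst σ ih

/-! ### Embedding of K into MT₀ -/

private lemma KAx_MT {α : CForm} (h : KAx α) : MTThm α.toMT := by
  cases h with
  | cp1 a b => exact MTThm.ax (MTAx.ipc1 _ _)
  | cp2 a b c => exact MTThm.ax (MTAx.ipc2 _ _ _)
  | cp3a a b => exact MTThm.ax (MTAx.ipc3a _ _)
  | cp3b a b => exact MTThm.ax (MTAx.ipc3b _ _)
  | cp4 a b => exact MTThm.ax (MTAx.ipc4 _ _)
  | cp5a a b => exact MTThm.ax (MTAx.tensor1 _ _)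
  | cp5b a b =>
      exact mtTrans (MTThm.ax (MTAx.tensor1 b.toMT a.toMT)) (MTThm.ax (MTAx.tensorComm _ _))
  | cp6 a b c => exact MTThm.ax (MTAx.tensor2 _ _ _)
  | cp7 a => exact MTThm.ax (MTAx.ipc7 _)
  | dne a => exact MTThm.ax (MTAx.dne a)
  | kax a b => exact MTThm.ax (MTAx.kbox _ _)
  | diaDef a =>
      have d1 : MTThm ((MTForm.dia a.toMT).impl (mneg (MTForm.box (mneg a.toMT)))) :=
        mtSwap (mtTrans (MTThm.ax (MTAx.kdia a.toMT MTForm.bot))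
          (mtLift _ (MTThm.ax MTAx.negDiaBot)))
      have step : MTThm ((MTForm.dia (mneg (mneg a.toMT))).impl (MTForm.dia a.toMT)) :=
        MTThm.mp (MTThm.ax (MTAx.kdia _ _)) (MTThm.nec (MTThm.ax (MTAx.dne a)))
      have d2 : MTThm ((mneg (MTForm.box (mneg a.toMT))).impl (MTForm.dia a.toMT)) :=
        mtTrans (MTThm.ax (MTAx.boxDiaNeg a.neg)) step
      exact MTThm.mp (MTThm.mp (MTThm.ax (MTAx.ipc4 _ _)) d1) d2

private lemma KThmN_MT {α : CForm} (h : KThmN α) : MTThm α.toMT := by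
  induction h with
  | ax h => exact KAx_MT h
  | mp _ _ ih1 ih2 => exact MTThm.mp ih1 ih2
  | nec _ ih => exact MTThm.nec ih

/-! ### Deduction theorems -/

private lemma kI (α : CForm) : KThm (α.impl α) :=
  KThm.mp (KThm.mp (KThm.ax (KAx.cp2 α (α.impl α) α))
    (KThm.ax (KAx.cp1 α (α.impl α)))) (KThm.ax (KAx.cp1 α α))

private lemma KDer_iff {α β : CForm} : KDer α β ↔ KThm (α.impl β) := by
  constructor
  · intro h
    induction h with
    | hyp => exact kI α
    | thm h => exact KThm.mp (KThm.ax (KAx.cp1 _ _)) h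
    | mp _ _ ih1 ih2 => exact KThm.mp (KThm.mp (KThm.ax (KAx.cp2 _ _ _)) ih1) ih2
  · intro h
    exact KDer.mp (KDer.thm h) KDer.hyp

private lemma MTDer_iff {γ φ : MTForm} : MTDer γ φ ↔ MTThm (γ.impl φ) := by
  constructor
  · intro h
    induction h with
    | hyp => exact mtI γ
    | thm h => exact MTThm.mp (MTThm.ax (MTAx.ipc1 _ _)) h
    | mp _ _ ih1 ih2 => exact MTThm.mp (MTThm.mp (MTThm.ax (MTAx.ipc2 _ _ _)) ih1) ih2
  · intro h
    exact MTDer.mp (MTDer.thm h) MTDer.hyp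

end Aux

section Semantics

/-- Kripke models. -/
structure KModel where
  W : Type
  R : W → W → Prop
  V : ℕ → W → Prop

/-- Classical (pointwise) satisfaction. -/
def csat (M : KModel) : CForm → M.W → Prop
  | .var p, w => M.V p w
  | .bot, _ => False
  | .and a b, w => csat M a w ∧ csat M b w
  | .tensor a b, w => csat M a w ∨ csat M b w
  | .impl a b, w => csat M a w → csat M b w
  | .box a, w => ∀ v, M.R w v → csat M a v
  | .dia a, w => ∃ v, M.R w v ∧ csat M a v

/-- Team satisfaction. -/
def tsat (M : KModel) : MTForm → Set M.W → Prop
  | .var p, T => ∀ w ∈ T, M.V p w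
  | .bot, T => ∀ w ∈ T, False
  | .dep αs β, T => ∀ w ∈ T, ∀ w' ∈ T,
      (∀ α ∈ αs, (csat M α w ↔ csat M α w')) → (csat M β w ↔ csat M β w')
  | .and φ ψ, T => tsat M φ T ∧ tsat M ψ T
  | .tensor φ ψ, T => ∃ A B, T = A ∪ B ∧ tsat M φ A ∧ tsat M ψ B
  | .or φ ψ, T => tsat M φ T ∨ tsat M ψ T
  | .impl φ ψ, T => ∀ S, S ⊆ T → tsat M φ S → tsat M ψ S
  | .box φ, T => tsat M φ {v | ∃ w ∈ T, M.R w v}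
  | .dia φ, T => ∃ S, (∀ w ∈ T, ∃ v ∈ S, M.R w v) ∧ tsat M φ S

private lemma tsat_empty (M : KModel) (φ : MTForm) : tsat M φ (∅ : Set M.W) := by
  induction φ with
  | var p => simp [tsat]
  | bot => simp [tsat]
  | dep αs β => simp [tsat]
  | and φ ψ ih1 ih2 => exact ⟨ih1, ih2⟩
  | tensor φ ψ ih1 ih2 => exact ⟨∅, ∅, by simp, ih1, ih2⟩
  | or φ ψ ih1 ih2 => exact Or.inl ih1
  | impl φ ψ ih1 ih2 =>
      intro S hS hφ
      rw [Set.subset_empty_iff] at hS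
      subst hS; exact ih2
  | box φ ih =>
      show tsat M φ _
      convert ih using 1
      ext v; simp
  | dia φ ih => exact ⟨∅, by simp, ih⟩

private lemma tsat_mono (M : KModel) (φ : MTForm) :
    ∀ {T S : Set M.W}, tsat M φ T → S ⊆ T → tsat M φ S := by
  induction φ with
  | var p => intro T S h hS w hw; exact h w (hS hw)
  | bot => intro T S h hS w hw; exact h w (hS hw)
  | dep αs β => intro T S h hS w hw w' hw' hag; exact h w (hS hw) w' (hS hw') hag
  | and φ ψ ih1 ih2 => intro T S h hS; exact ⟨ih1 h.1 hS, ih2 h.2 hS⟩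
  | tensor φ ψ ih1 ih2 =>
      rintro T S ⟨A, B, rfl, hA, hB⟩ hS
      refine ⟨S ∩ A, S ∩ B, ?_, ih1 hA Set.inter_subset_right,
        ih2 hB Set.inter_subset_right⟩
      rw [← Set.inter_union_distrib_left]
      exact (Set.inter_eq_left.mpr hS).symm
  | or φ ψ ih1 ih2 =>
      rintro T S (h | h) hS
      · exact Or.inl (ih1 h hS)
      · exact Or.inr (ih2 h hS)
  | impl φ ψ ih1 ih2 => intro T S h hS U hU hφ; exact h U (hU.trans hS) hφ
  | box φ ih =>
      intro T S h hS
      exact ih h (fun v ⟨w, hw, hr⟩ => ⟨w, hS hw, hr⟩)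
  | dia φ ih =>
      rintro T S ⟨U, hcov, hU⟩ hS
      exact ⟨U, fun w hw => hcov w (hS hw), hU⟩

private lemma tsat_flat (M : KModel) (α : CForm) :
    ∀ T : Set M.W, tsat M α.toMT T ↔ ∀ w ∈ T, csat M α w := by
  induction α with
  | var p => intro T; rfl
  | bot => intro T; rfl
  | and a b iha ihb =>
      intro T
      constructor
      · rintro ⟨h1, h2⟩ w hw; exact ⟨(iha T).1 h1 w hw, (ihb T).1 h2 w hw⟩
      · intro h
        exact ⟨(iha T).2 (fun w hw => (h w hw).1), (ihb T).2 (fun w hw => (h w hw).2)⟩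
  | tensor a b iha ihb =>
      intro T
      constructor
      · rintro ⟨A, B, rfl, hA, hB⟩ w hw
        rcases hw with hw | hw
        · exact Or.inl ((iha A).1 hA w hw)
        · exact Or.inr ((ihb B).1 hB w hw)
      · intro h
        refine ⟨{w ∈ T | csat M a w}, {w ∈ T | csat M b w}, ?_, ?_, ?_⟩
        · ext w
          simp only [Set.mem_union, Set.mem_setOf_eq, Set.mem_sep_iff]
          constructor
          · intro hw; rcases h w hw with h' | h'
            · exact Or.inl ⟨hw, h'⟩
            · exact Or.inr ⟨hw, h'⟩
          · rintro (⟨hw, _⟩ | ⟨hw, _⟩) <;> exact hw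
        · exact (iha _).2 (fun w hw => hw.2)
        · exact (ihb _).2 (fun w hw => hw.2)
  | impl a b iha ihb =>
      intro T
      constructor
      · intro h w hw ha
        have := h {w} (Set.singleton_subset_iff.mpr hw)
          ((iha {w}).2 (by simpa using ha))
        simpa using (ihb {w}).1 this w rfl
      · intro h S hS hφ
        exact (ihb S).2 (fun w hw => h w (hS hw) ((iha S).1 hφ w hw))
  | box a iha =>
      intro T
      constructor
      · intro h w hw v hr
        exact (iha _).1 h v ⟨w, hw, hr⟩
      · rintro h
        exact (iha _).2 (fun v ⟨w, hw, hr⟩ => h w hw v hr)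
  | dia a iha =>
      intro T
      constructor
      · rintro ⟨S, hcov, hS⟩ w hw
        obtain ⟨v, hv, hr⟩ := hcov w hw
        exact ⟨v, hr, (iha S).1 hS v hv⟩
      · intro h
        refine ⟨{v | csat M a v ∧ ∃ w ∈ T, M.R w v}, ?_, ?_⟩
        · intro w hw
          obtain ⟨v, hr, ha⟩ := h w hw
          exact ⟨v, ⟨ha, w, hw, hr⟩, hr⟩
        · exact (iha _).2 (fun v hv => hv.1)

private lemma tsat_mneg (M : KModel) (α : CForm) (T : Set M.W) :
    tsat M (mneg α.toMT) T ↔ ∀ w ∈ T, ¬ csat M α w := by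
  constructor
  · intro h w hw ha
    have := h {w} (Set.singleton_subset_iff.mpr hw) ((tsat_flat M α _).2 (by simpa using ha))
    exact this w rfl
  · intro h S hS hφ w hw
    exact h w (hS hw) ((tsat_flat M α S).1 hφ w hw)

private lemma tsat_exclMid (M : KModel) (α : CForm) (T : Set M.W) :
    tsat M (exclMid α) T ↔ (∀ w ∈ T, csat M α w) ∨ (∀ w ∈ T, ¬ csat M α w) := by
  show tsat M α.toMT T ∨ tsat M (mneg α.toMT) T ↔ _
  rw [tsat_flat, tsat_mneg]

private lemma tsat_bigAnd (M : KModel) :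
    ∀ (l : List MTForm) (T : Set M.W), tsat M (bigAnd l) T ↔ ∀ φ ∈ l, tsat M φ T := by
  intro l
  induction l with
  | nil =>
      intro T; simp only [bigAnd, List.not_mem_nil, false_implies, implies_true, iff_true]
      intro S hS h; exact h
  | cons φ l ih =>
      intro T
      cases l with
      | nil => simp [bigAnd]
      | cons ψ l' =>
          show tsat M φ T ∧ tsat M (bigAnd (ψ :: l')) T ↔ _
          rw [ih T]
          simp
end Semantics

section Soundness

private lemma boxTeam_mono (M : KModel) {U S : Set M.W} (h : U ⊆ S) :
    {v | ∃ w ∈ U, M.R w v} ⊆ {v | ∃ w ∈ S, M.R w v} := by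
  rintro v ⟨w, hw, hr⟩; exact ⟨w, h hw, hr⟩

private lemma mtax_sound {φ : MTForm} (hax : MTAx φ) (M : KModel) (T : Set M.W) :
    tsat M φ T := by
  cases hax with
  | ipc1 φ ψ =>
      intro S _ hφ U hU _
      exact tsat_mono M φ hφ hU
  | ipc2 φ ψ χ =>
      intro S _ h1 S' hS' h2 S'' hS'' hφ
      exact h1 S'' (hS''.trans hS') hφ S'' (le_refl _) (h2 S'' hS'' hφ)
  | ipc3a φ ψ => intro S _ h; exact h.1
  | ipc3b φ ψ => intro S _ h; exact h.2
  | ipc4 φ χ =>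
      intro S _ h1 U hU h2
      exact ⟨tsat_mono M φ h1 hU, h2⟩
  | ipc5a φ ψ => intro S _ h; exact Or.inl h
  | ipc5b φ ψ => intro S _ h; exact Or.inr h
  | ipc6 φ ψ χ =>
      intro S _ h1 U hU h2 V hV h3
      rcases h3 with h | h
      · exact h1 V (hV.trans hU) h
      · exact h2 V hV h
  | ipc7 φ =>
      intro S _ h
      have : S = ∅ := Set.eq_empty_iff_forall_notMem.mpr (fun w hw => h w hw)
      subst this
      exact tsat_empty M φ
  | split α φ ψ =>
      intro S _ h
      set Sα : Set M.W := {w ∈ S | csat M α w} with hSα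
      have h1 : tsat M α.toMT Sα := (tsat_flat M α Sα).2 (fun w hw => hw.2)
      have h2 := h Sα (Set.sep_subset _ _) h1
      rcases h2 with h2 | h2
      · refine Or.inl ?_
        intro U hU hUα
        exact tsat_mono M φ h2
          (fun w hw => ⟨hU hw, (tsat_flat M α U).1 hUα w hw⟩)
      · refine Or.inr ?_
        intro U hU hUα
        exact tsat_mono M ψ h2
          (fun w hw => ⟨hU hw, (tsat_flat M α U).1 hUα w hw⟩)
  | dne α =>
      intro S _ h
      refine (tsat_flat M α S).2 (fun w hw => ?_)
      by_contra hc
      have hm : tsat M (mneg α.toMT) {w} :=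
        (tsat_mneg M α {w}).2 (by simpa using hc)
      exact h {w} (Set.singleton_subset_iff.mpr hw) hm w rfl
  | kbox φ ψ =>
      intro S _ h1 U hU h2
      exact h1 _ (boxTeam_mono M hU) h2
  | kdia φ ψ =>
      intro S _ h1 U hU h2
      obtain ⟨T', cov, hT'⟩ := h2
      refine ⟨T' ∩ {v | ∃ w ∈ S, M.R w v}, ?_, ?_⟩
      · intro w hw
        obtain ⟨v, hv, hr⟩ := cov w hw
        exact ⟨v, ⟨hv, w, hU hw, hr⟩, hr⟩
      · exact h1 _ Set.inter_subset_right (tsat_mono M φ hT' Set.inter_subset_left)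
  | negDiaBot =>
      intro S _ h w hw
      obtain ⟨U, cov, hU⟩ := h
      obtain ⟨v, hv, _⟩ := cov w hw
      exact hU v hv
  | diaOr φ ψ =>
      intro S _ h
      obtain ⟨U, cov, hU⟩ := h
      rcases hU with h | h
      · exact Or.inl ⟨U, cov, h⟩
      · exact Or.inr ⟨U, cov, h⟩
  | fs φ ψ =>
      intro S _ h
      intro U hU hφ
      have hdia : tsat M (MTForm.dia φ) {w ∈ S | ∃ v ∈ U, M.R w v} :=
        ⟨U, fun w hw => hw.2, hφ⟩
      have hbox := h _ (Set.sep_subset _ _) hdia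
      refine tsat_mono M ψ hbox ?_
      intro u hu
      obtain ⟨w, hw, hr⟩ := hU hu
      exact ⟨w, ⟨hw, u, hu, hr⟩, hr⟩
  | depAx αs β =>
      constructor
      · intro S _ hdep U hU hbig
        have hconst : ∀ α ∈ αs, (∀ w ∈ U, csat M α w) ∨ (∀ w ∈ U, ¬ csat M α w) := by
          intro α hα
          have := (tsat_bigAnd M _ U).1 hbig (exclMid α) (List.mem_map_of_mem hα)
          exact (tsat_exclMid M α U).1 this
        rcases Set.eq_empty_or_nonempty U with rfl | ⟨w₀, hw₀⟩
        · exact Or.inl (tsat_empty M _)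
        · have key : ∀ w ∈ U, (csat M β w ↔ csat M β w₀) := by
            intro w hw
            refine hdep w (hU hw) w₀ (hU hw₀) ?_
            intro α hα
            rcases hconst α hα with h | h
            · simp [h w hw, h w₀ hw₀]
            · simp [h w hw, h w₀ hw₀]
          rw [tsat_exclMid]
          by_cases hb : csat M β w₀
          · exact Or.inl (fun w hw => (key w hw).2 hb)
          · exact Or.inr (fun w hw hc => hb ((key w hw).1 hc))
      · intro S _ hX w hw w' hw' hag
        have hUsub : {w, w'} ⊆ S := by
          intro x hx
          rcases hx with rfl | hx
          · exact hw
          · rw [Set.mem_singleton_iff] at hx; subst hx; exact hw'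
        have hbig : tsat M (bigAnd (αs.map exclMid)) {w, w'} := by
          rw [tsat_bigAnd]
          intro ψ hψ
          obtain ⟨α, hα, rfl⟩ := List.mem_map.1 hψ
          rw [tsat_exclMid]
          by_cases hc : csat M α w
          · refine Or.inl ?_
            intro x hx
            rcases hx with rfl | hx
            · exact hc
            · rw [Set.mem_singleton_iff] at hx; subst hx; exact (hag α hα).1 hc
          · refine Or.inr ?_
            intro x hx
            rcases hx with rfl | hx
            · exact hc
            · rw [Set.mem_singleton_iff] at hx; subst hx
              exact fun h => hc ((hag α hα).2 h)
        have := (tsat_exclMid M β _).1 (hX {w, w'} hUsub hbig)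
        have hwmem : w ∈ ({w, w'} : Set M.W) := Or.inl rfl
        have hw'mem : w' ∈ ({w, w'} : Set M.W) := Or.inr rfl
        rcases this with h | h
        · simp [h w hwmem, h w' hw'mem]
        · simp [h w hwmem, h w' hw'mem]
  | tensor1 φ ψ =>
      intro S _ h
      exact ⟨S, ∅, (Set.union_empty S).symm, h, tsat_empty M ψ⟩
  | tensor2 φ ψ α =>
      intro S _ h1 S' hS' h2 U hU h3
      obtain ⟨A, B, rfl, hA, hB⟩ := h3
      have hAα := (tsat_flat M α A).1
        (h1 A ((Set.subset_union_left.trans hU).trans hS') hA)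
      have hBα := (tsat_flat M α B).1 (h2 B (Set.subset_union_right.trans hU) hB)
      refine (tsat_flat M α _).2 ?_
      rintro w (hw | hw)
      · exact hAα w hw
      · exact hBα w hw
  | tensor3 φ ψ χ θ =>
      intro S _ h1 U hU h2 V hV h3
      obtain ⟨A, B, rfl, hA, hB⟩ := h3
      exact ⟨A, B, rfl,
        h1 A ((Set.subset_union_left.trans hV).trans hU) hA,
        h2 B (Set.subset_union_right.trans hV) hB⟩
  | tensorComm φ ψ =>
      intro S _ h
      obtain ⟨A, B, rfl, hA, hB⟩ := h
      exact ⟨B, A, Set.union_comm A B, hB, hA⟩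
  | tensorAssoc φ ψ χ =>
      intro S _ h
      obtain ⟨A, B, rfl, hA, hB⟩ := h
      obtain ⟨C, D, rfl, hC, hD⟩ := hB
      exact ⟨A ∪ C, D, (Set.union_assoc A C D).symm, ⟨A, C, rfl, hA, hC⟩, hD⟩
  | tensorOr φ ψ χ =>
      intro S _ h
      obtain ⟨A, B, rfl, hA, hB⟩ := h
      rcases hB with h | h
      · exact Or.inl ⟨A, B, rfl, hA, h⟩
      · exact Or.inr ⟨A, B, rfl, hA, h⟩
  | boxDiaNeg α =>
      intro S _ h
      refine ⟨{v | (∃ w ∈ S, M.R w v) ∧ ¬ csat M α v}, ?_, ?_⟩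
      · intro w hw
        by_contra hc
        push_neg at hc
        have hbox : tsat M (MTForm.box α.toMT) {w} := by
          refine (tsat_flat M α _).2 ?_
          rintro v ⟨u, hu, hr⟩
          have hu' : u = w := hu
          rw [hu'] at hr
          by_contra hv
          exact hc v ⟨⟨w, hw, hr⟩, hv⟩ hr
        exact h {w} (Set.singleton_subset_iff.mpr hw) hbox w rfl
      · exact (tsat_mneg M α _).2 (fun v hv => hv.2)
  | boxOr φ ψ => intro S _ h; exact h

private lemma MTThm_sound {φ : MTForm} (h : MTThm φ) :
    ∀ (M : KModel) (T : Set M.W), tsat M φ T := by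
  induction h with
  | ax h => exact mtax_sound h
  | mp _ _ ih1 ih2 =>
      intro M T
      exact ih1 M T T (le_refl _) (ih2 M T)
  | nec _ ih =>
      intro M T
      exact ih M _

end Soundness

section Completeness

/-- Derivations from a set of assumptions in K (no necessitation/substitution
on assumptions). -/
inductive KProv (Γ : Set CForm) : CForm → Prop where
  | hyp {α : CForm} : α ∈ Γ → KProv Γ α
  | thm {α : CForm} : KThm α → KProv Γ α
  | mp {α β : CForm} : KProv Γ (α.impl β) → KProv Γ α → KProv Γ β

private lemma KProv.weak {Γ Δ : Set CForm} {α : CForm} (hs : Γ ⊆ Δ) (h : KProv Γ α) :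
    KProv Δ α := by
  induction h with
  | hyp h => exact KProv.hyp (hs h)
  | thm h => exact KProv.thm h
  | mp _ _ ih1 ih2 => exact KProv.mp ih1 ih2

private lemma KProv.ded {Γ : Set CForm} {γ α : CForm} (h : KProv (insert γ Γ) α) :
    KProv Γ (γ.impl α) := by
  induction h with
  | hyp h =>
      rcases h with rfl | h
      · exact KProv.thm (kI _)
      · exact KProv.mp (KProv.thm (KThm.ax (KAx.cp1 _ _))) (KProv.hyp h)
  | thm h => exact KProv.mp (KProv.thm (KThm.ax (KAx.cp1 _ _))) (KProv.thm h)
  | mp _ _ ih1 ih2 =>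
      exact KProv.mp (KProv.mp (KProv.thm (KThm.ax (KAx.cp2 _ _ _))) ih1) ih2

private lemma KProv_empty {α : CForm} (h : KProv ∅ α) : KThm α := by
  induction h with
  | hyp h => exact absurd h (Set.notMem_empty _)
  | thm h => exact h
  | mp _ _ ih1 ih2 => exact KThm.mp ih1 ih2

private lemma KProv.compact {Γ : Set CForm} {α : CForm} (h : KProv Γ α) :
    ∃ Δ, Δ ⊆ Γ ∧ Δ.Finite ∧ KProv Δ α := by
  induction h with
  | hyp h => exact ⟨{_}, Set.singleton_subset_iff.mpr h, Set.finite_singleton _,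
      KProv.hyp rfl⟩
  | thm h => exact ⟨∅, Set.empty_subset _, Set.finite_empty, KProv.thm h⟩
  | mp _ _ ih1 ih2 =>
      obtain ⟨Δ1, hs1, hf1, hp1⟩ := ih1
      obtain ⟨Δ2, hs2, hf2, hp2⟩ := ih2
      exact ⟨Δ1 ∪ Δ2, Set.union_subset hs1 hs2, hf1.union hf2,
        KProv.mp (hp1.weak Set.subset_union_left) (hp2.weak Set.subset_union_right)⟩

/-- Consistency. -/
def KCons (Γ : Set CForm) : Prop := ¬ KProv Γ CForm.bot

private lemma chain_finite_subset {c : Set (Set CForm)} (hc : IsChain (· ⊆ ·) c)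
    (hne : c.Nonempty) {Δ : Set CForm} (hΔ : Δ.Finite) :
    Δ ⊆ ⋃₀ c → ∃ X ∈ c, Δ ⊆ X := by
  induction Δ, hΔ using Set.Finite.induction_on with
  | empty =>
      intro _
      obtain ⟨X, hX⟩ := hne
      exact ⟨X, hX, Set.empty_subset _⟩
  | @insert a Δ' _ _ ih =>
      intro hsub
      obtain ⟨X, hX, hXs⟩ := ih ((Set.subset_insert a Δ').trans hsub)
      obtain ⟨Y, hY, haY⟩ := hsub (Set.mem_insert a Δ')
      rcases eq_or_ne X Y with rfl | hne'
      · exact ⟨X, hX, Set.insert_subset haY hXs⟩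
      rcases hc hX hY hne' with h | h
      · exact ⟨Y, hY, Set.insert_subset haY (hXs.trans h)⟩
      · exact ⟨X, hX, Set.insert_subset (h haY) hXs⟩

/-- Maximal consistent sets. -/
def KMCS (Γ : Set CForm) : Prop :=
  KCons Γ ∧ ∀ Δ, KCons Δ → Γ ⊆ Δ → Δ ⊆ Γ

private lemma lindenbaum {Γ₀ : Set CForm} (h : KCons Γ₀) :
    ∃ Γ, Γ₀ ⊆ Γ ∧ KMCS Γ := by
  obtain ⟨Γ, hsub, hmax⟩ := zorn_subset_nonempty {Δ | KCons Δ}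
    (fun c hc hchain hne => by
      refine ⟨⋃₀ c, ?_, fun s hs => Set.subset_sUnion_of_mem hs⟩
      intro hcon
      obtain ⟨Δ, hΔsub, hΔfin, hΔprov⟩ := hcon.compact
      obtain ⟨X, hX, hXs⟩ := chain_finite_subset hchain hne hΔfin hΔsub
      exact hc hX (hΔprov.weak hXs)) Γ₀ h
  exact ⟨Γ, hsub, hmax.prop, fun Δ hΔ hsub' => (hmax.eq_of_subset hΔ hsub').ge⟩

private lemma KMCS.mem_of_prov {Γ : Set CForm} (h : KMCS Γ) {α : CForm}
    (hp : KProv Γ α) : α ∈ Γ := by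
  refine h.2 (insert α Γ) ?_ (Set.subset_insert α Γ) (Set.mem_insert α Γ)
  intro hcon
  exact h.1 (KProv.mp hcon.ded hp)

private lemma KMCS.not_both {Γ : Set CForm} (h : KMCS Γ) {α : CForm}
    (h1 : α ∈ Γ) (h2 : α.neg ∈ Γ) : False :=
  h.1 (KProv.mp (KProv.hyp h2) (KProv.hyp h1))

private lemma KMCS.neg_mem {Γ : Set CForm} (h : KMCS Γ) {α : CForm} (hα : α ∉ Γ) :
    α.neg ∈ Γ := by
  by_cases hcon : KCons (insert α Γ)
  · exact absurd (h.2 _ hcon (Set.subset_insert α Γ) (Set.mem_insert α Γ)) hα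
  · exact h.mem_of_prov (KProv.ded (not_not.mp hcon))

private lemma prov_box {Δ : Set CForm} (hΔ : Δ.Finite) :
    ∀ α : CForm, KProv Δ α → KProv (CForm.box '' Δ) α.box := by
  induction Δ, hΔ using Set.Finite.induction_on with
  | empty =>
      intro α h
      exact KProv.thm (KThm.nec (KProv_empty h))
  | @insert a Δ' _ _ ih =>
      intro α h
      have h1 := ih _ h.ded
      have h2 : KProv (CForm.box '' Δ') ((CForm.box a).impl (CForm.box α)) :=
        KProv.mp (KProv.thm (KThm.ax (KAx.kax a α))) h1
      rw [Set.image_insert_eq]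
      exact KProv.mp (h2.weak (Set.subset_insert _ _))
        (KProv.hyp (Set.mem_insert _ _))

/-- The canonical accessibility relation. -/
def canR (Γ Δ : Set CForm) : Prop := ∀ α : CForm, CForm.box α ∈ Γ → α ∈ Δ

private lemma exists_succ {Γ : Set CForm} (hΓ : KMCS Γ) {α : CForm}
    (h : CForm.box α ∉ Γ) : ∃ Δ, KMCS Δ ∧ canR Γ Δ ∧ α ∉ Δ := by
  set Γb : Set CForm := {β | CForm.box β ∈ Γ} with hΓb
  have hcons : KCons (insert α.neg Γb) := by
    intro hcon
    have h1 : KProv Γb α := KProv.mp (KProv.thm (KThm.ax (KAx.dne α))) hcon.ded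
    obtain ⟨Δ, hsub, hfin, hprov⟩ := h1.compact
    have h2 := prov_box hfin α hprov
    have h3 : CForm.box '' Δ ⊆ Γ := by
      rintro x ⟨β, hβ, rfl⟩
      exact hsub hβ
    exact h (hΓ.mem_of_prov (h2.weak h3))
  obtain ⟨Δ, hsub, hΔ⟩ := lindenbaum hcons
  refine ⟨Δ, hΔ, ?_, ?_⟩
  · intro β hβ
    exact hsub (Set.mem_insert_of_mem _ hβ)
  · intro hαΔ
    exact hΔ.not_both hαΔ (hsub (Set.mem_insert _ _))

/-- The canonical model. -/
def canM : KModel where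
  W := {Γ : Set CForm // KMCS Γ}
  R := fun Γ Δ => canR Γ.1 Δ.1
  V := fun p Γ => CForm.var p ∈ Γ.1

private lemma truth_lemma : ∀ (α : CForm) (Γ : canM.W), csat canM α Γ ↔ α ∈ Γ.1 := by
  intro α
  induction α with
  | var p => intro Γ; rfl
  | bot =>
      intro Γ
      simp only [csat, false_iff]
      intro h
      exact Γ.2.1 (KProv.hyp h)
  | and a b iha ihb =>
      intro Γ
      constructor
      · rintro ⟨h1, h2⟩
        exact Γ.2.mem_of_prov (KProv.mp (KProv.mp (KProv.thm (KThm.ax (KAx.cp4 a b)))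
          (KProv.hyp ((iha Γ).1 h1))) (KProv.hyp ((ihb Γ).1 h2)))
      · intro h
        constructor
        · exact (iha Γ).2 (Γ.2.mem_of_prov
            (KProv.mp (KProv.thm (KThm.ax (KAx.cp3a a b))) (KProv.hyp h)))
        · exact (ihb Γ).2 (Γ.2.mem_of_prov
            (KProv.mp (KProv.thm (KThm.ax (KAx.cp3b a b))) (KProv.hyp h)))
  | tensor a b iha ihb =>
      intro Γ
      constructor
      · rintro (h | h)
        · exact Γ.2.mem_of_prov (KProv.mp (KProv.thm (KThm.ax (KAx.cp5a a b)))
            (KProv.hyp ((iha Γ).1 h)))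
        · exact Γ.2.mem_of_prov (KProv.mp (KProv.thm (KThm.ax (KAx.cp5b a b)))
            (KProv.hyp ((ihb Γ).1 h)))
      · intro h
        by_cases ha : a ∈ Γ.1
        · exact Or.inl ((iha Γ).2 ha)
        by_cases hb : b ∈ Γ.1
        · exact Or.inr ((ihb Γ).2 hb)
        exfalso
        exact Γ.2.1 (KProv.mp (KProv.mp (KProv.mp
          (KProv.thm (KThm.ax (KAx.cp6 a b CForm.bot)))
          (KProv.hyp (Γ.2.neg_mem ha))) (KProv.hyp (Γ.2.neg_mem hb))) (KProv.hyp h))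
  | impl a b iha ihb =>
      intro Γ
      constructor
      · intro h
        by_cases ha : a ∈ Γ.1
        · have hb : b ∈ Γ.1 := (ihb Γ).1 (h ((iha Γ).2 ha))
          exact Γ.2.mem_of_prov (KProv.mp (KProv.thm (KThm.ax (KAx.cp1 b a)))
            (KProv.hyp hb))
        · refine Γ.2.mem_of_prov (KProv.ded ?_)
          refine KProv.mp (KProv.thm (KThm.ax (KAx.cp7 b))) ?_
          exact KProv.mp (KProv.hyp (Set.mem_insert_of_mem _ (Γ.2.neg_mem ha)))
            (KProv.hyp (Set.mem_insert _ _))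
      · intro h ha
        exact (ihb Γ).2 (Γ.2.mem_of_prov
          (KProv.mp (KProv.hyp h) (KProv.hyp ((iha Γ).1 ha))))
  | box a iha =>
      intro Γ
      constructor
      · intro h
        by_contra hb
        obtain ⟨Δ, hΔ, hR, haΔ⟩ := exists_succ Γ.2 hb
        exact haΔ ((iha ⟨Δ, hΔ⟩).1 (h ⟨Δ, hΔ⟩ hR))
      · intro h Δ hR
        exact (iha Δ).2 (hR a h)
  | dia a iha =>
      intro Γ
      have keyF : KThm ((CForm.dia a).impl ((CForm.box a.neg).neg)) :=
        KThm.mp (KThm.ax (KAx.cp3a _ _)) (KThm.ax (KAx.diaDef a))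
      have keyB : KThm (((CForm.box a.neg).neg).impl (CForm.dia a)) :=
        KThm.mp (KThm.ax (KAx.cp3b _ _)) (KThm.ax (KAx.diaDef a))
      constructor
      · rintro ⟨Δ, hR, hs⟩
        have haΔ : a ∈ Δ.1 := (iha Δ).1 hs
        by_contra hdia
        have h1 : (CForm.box a.neg) ∈ Γ.1 := by
          by_contra hbox
          exact Γ.2.not_both (Γ.2.neg_mem hbox)
            (Γ.2.mem_of_prov (KProv.ded (KProv.mp
              (KProv.hyp (Set.mem_insert_of_mem _ (Γ.2.neg_mem hdia)))
              (KProv.mp (KProv.thm keyB) (KProv.hyp (Set.mem_insert _ _))))))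
        exact Δ.2.not_both haΔ (hR a.neg h1)
      · intro h
        have h1 : (CForm.box a.neg) ∉ Γ.1 := by
          intro hbox
          have h2 : (CForm.box a.neg).neg ∈ Γ.1 :=
            Γ.2.mem_of_prov (KProv.mp (KProv.thm keyF) (KProv.hyp h))
          exact Γ.2.not_both hbox h2
        obtain ⟨Δ, hΔ, hR, haΔ⟩ := exists_succ Γ.2 h1
        refine ⟨⟨Δ, hΔ⟩, hR, (iha ⟨Δ, hΔ⟩).2 ?_⟩
        by_contra ha
        exact haΔ (hΔ.neg_mem ha)

private lemma K_complete {γ : CForm} (h : ∀ (M : KModel) (w : M.W), csat M γ w) :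
    KThm γ := by
  by_contra hng
  have hcons : KCons {γ.neg} := by
    intro hcon
    have h1 : KProv ∅ (γ.neg.impl CForm.bot) := by
      have : ({γ.neg} : Set CForm) = insert γ.neg ∅ := by simp
      exact KProv.ded (this ▸ hcon)
    exact hng (KThm.mp (KThm.ax (KAx.dne γ)) (KProv_empty h1))
  obtain ⟨Γ, hsub, hΓ⟩ := lindenbaum hcons
  have hγn : γ.neg ∈ Γ := hsub rfl
  have hγ : γ ∈ Γ := (truth_lemma γ ⟨Γ, hΓ⟩).1 (h canM ⟨Γ, hΓ⟩)
  exact hΓ.not_both hγ hγn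

end Completeness

/-- STATEMENT 8: for classical modal formulas, derivability in K coincides with
derivability in the Hilbert system of MT₀. -/
theorem k_eq_mt0_on_classical (α β : CForm) :
    KDer α β ↔ MTDer α.toMT β.toMT := by
  constructor
  · intro h
    exact MTDer_iff.2 (KThmN_MT (KThm_toN (KDer_iff.1 h)))
  · intro h
    have h1 : MTThm (α.toMT.impl β.toMT) := MTDer_iff.1 h
    have h2 : ∀ (M : KModel) (w : M.W), csat M (α.impl β) w := by
      intro M w ha
      have h3 := MTThm_sound h1 M {w} {w} (le_refl _)
        ((tsat_flat M α {w}).2 (by simpa using ha))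
      exact (tsat_flat M β {w}).1 h3 w rfl
    exact KDer_iff.2 (K_complete h2)
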